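/- arXiv:2504.11614 — 7 statements merged into one kernel-verified Lean document; each statement's English description precedes it below -/
import Mathlib

section
/- Let H be a complex Hilbert space and let P and Q be orthogonal projections on H. Suppose λ is a real number with λ ≠ 0 and λ ≠ 1, and there exists a nonzero f ∈ H with PQPf = λf. Then 0 < λ < 1 and both √(1−λ) and −√(1−λ) are eigenvalues of P − Q. -/
/-!
Since `⟪f, PQPf⟫ = ‖QPf‖² ≤ ‖f‖²`, the eigenvalue `λ` lies in `[0, 1]`. As `λ ≠ 0`, `Pf = f` and
`PQf = λf`, so `P - Q` acts on the span of `f` and `Qf` by an explicit `2 × 2` matrix whose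
eigenvalues are `±√(1 - λ)`.
-/

open ContinuousLinearMap

section Algebraic

variable {K V F : Type*} [Field K] [AddCommGroup V] [Module K V] [FunLike F V V]
  [LinearMapClass F K V V]

/-- The eigenvector is `μ f + (1 - Q) f`; it could vanish only if `Q f` were a multiple of `f`,
which forces `l = μ + 1` and hence `l ∈ {0, 1}`. -/
theorem exists_apply_sub_apply_eq_smul_of_sq_eq {P Q : F} {f : V} {l μ : K} (hf : f ≠ 0)
    (hPf : P f = f) (hPQf : P (Q f) = l • f) (hQf : Q (Q f) = Q f)
    (hl0 : l ≠ 0) (hl1 : l ≠ 1) (hμ : μ ^ 2 = 1 - l) :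
    ∃ g : V, g ≠ 0 ∧ P g - Q g = μ • g := by
  have hl : l = 1 - μ ^ 2 := by rw [hμ]; ring
  refine ⟨μ • f + (f - Q f), fun hg => ?_, ?_⟩
  · have hQf' : Q f = (μ + 1) • f := by linear_combination (norm := module) -hg
    have hlμ : l = μ + 1 := by
      refine smul_left_injective K hf ?_
      simpa only [hQf', map_smul, hPf] using hPQf.symm
    have : l * (l - 1) = 0 := by linear_combination hμ + (l - 1 + μ) * hlμ
    rcases mul_eq_zero.mp this with h | h
    · exact hl0 h
    · exact hl1 (sub_eq_zero.mp h)
  · simp only [map_add, map_sub, map_smul, hPf, hPQf, hQf, hl]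
    module

end Algebraic

section Hilbert

variable {𝕜 E : Type*} [RCLike 𝕜] [NormedAddCommGroup E] [InnerProductSpace 𝕜 E] [CompleteSpace E]

theorem inner_apply_apply_apply_eq_norm_sq {P Q : E →L[𝕜] E} (hP : IsSelfAdjoint P)
    (hQ : IsStarProjection Q) (x : E) :
    inner 𝕜 x (P (Q (P x))) = (‖Q (P x)‖ : 𝕜) ^ 2 := by
  have hQQ : Q (Q (P x)) = Q (P x) := congr($(hQ.isIdempotentElem.eq) (P x))
  rw [← hP.isSymmetric.apply_clm, ← hQQ, ← hQ.isSelfAdjoint.isSymmetric.apply_clm, hQQ,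
    inner_self_eq_norm_sq_to_K]

theorem mem_Icc_of_apply_apply_apply_eq_smul {P Q : E →L[𝕜] E} (hP : IsStarProjection P)
    (hQ : IsStarProjection Q) {l : ℝ} {f : E} (hf : f ≠ 0) (h : P (Q (P f)) = (l : 𝕜) • f) :
    l ∈ Set.Icc 0 1 := by
  have hnorm : l * ‖f‖ ^ 2 = ‖Q (P f)‖ ^ 2 := by
    have := inner_apply_apply_apply_eq_norm_sq hP.isSelfAdjoint hQ f
    rw [h, inner_smul_right, inner_self_eq_norm_sq_to_K] at this
    exact_mod_cast this
  have hle : ‖Q (P f)‖ ≤ ‖f‖ := calc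
    ‖Q (P f)‖ ≤ ‖P f‖ := by simpa using le_of_opNorm_le Q (hQ.norm_le Q) (P f)
    _ ≤ ‖f‖ := by simpa using le_of_opNorm_le P (hP.norm_le P) f
  have hf2 : 0 < ‖f‖ ^ 2 := by positivity
  constructor
  · nlinarith [sq_nonneg ‖Q (P f)‖]
  · nlinarith [norm_nonneg (Q (P f))]

end Hilbert

/-- If `P, Q` are orthogonal projections on a complex Hilbert space, `λ ≠ 0, 1` is real and
`PQPf = λf` for some nonzero `f`, then `0 < λ < 1` and `±√(1−λ)` are eigenvalues of `P − Q`. -/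
theorem stmt_0 {H : Type*} [NormedAddCommGroup H] [InnerProductSpace ℂ H] [CompleteSpace H]
    (P Q : H →L[ℂ] H)
    (hP : IsSelfAdjoint P) (hP2 : P ∘L P = P)
    (hQ : IsSelfAdjoint Q) (hQ2 : Q ∘L Q = Q)
    (l : ℝ) (hl0 : l ≠ 0) (hl1 : l ≠ 1)
    (f : H) (hf : f ≠ 0) (hPQP : P (Q (P f)) = (l : ℂ) • f) :
    0 < l ∧ l < 1 ∧
      (∃ g : H, g ≠ 0 ∧ (P - Q) g = ((Real.sqrt (1 - l) : ℂ)) • g) ∧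
      (∃ g : H, g ≠ 0 ∧ (P - Q) g = (-(Real.sqrt (1 - l) : ℂ)) • g) := by
  obtain ⟨hl_nonneg, hl_le⟩ :=
    mem_Icc_of_apply_apply_apply_eq_smul ⟨hP2, hP⟩ ⟨hQ2, hQ⟩ hf hPQP
  have hlC0 : (l : ℂ) ≠ 0 := by exact_mod_cast hl0
  have hlC1 : (l : ℂ) ≠ 1 := by exact_mod_cast hl1
  have hPf : P f = f := by
    refine smul_right_injective H hlC0 (?_ : (l : ℂ) • P f = (l : ℂ) • f)
    rw [← map_smul, ← hPQP, ← comp_apply P P, hP2]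
  have hPQf : P (Q f) = (l : ℂ) • f := by rwa [hPf] at hPQP
  have hQf : Q (Q f) = Q f := by rw [← comp_apply Q Q, hQ2]
  have hμ : (Real.sqrt (1 - l) : ℂ) ^ 2 = 1 - l := by
    exact_mod_cast Real.sq_sqrt (sub_nonneg.mpr hl_le)
  refine ⟨lt_of_le_of_ne hl_nonneg (Ne.symm hl0), lt_of_le_of_ne hl_le hl1, ?_, ?_⟩
  · exact exists_apply_sub_apply_eq_smul_of_sq_eq hf hPf hPQf hQf hlC0 hlC1 hμ
  · exact exists_apply_sub_apply_eq_smul_of_sq_eq hf hPf hPQf hQf hlC0 hlC1 (by rwa [neg_sq])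
end

section
/- Let H be a complex Hilbert space and let P and Q be orthogonal projections on H. If μ is an eigenvalue of P − Q with μ ≠ 0, μ ≠ 1 and μ ≠ −1, then 1 − μ² is an eigenvalue of PQP. -/
/-!
Applying `P` and `Q` to `P g - Q g = μ • g` gives `P (Q g) = (1 - μ) • P g` and
`Q (P g) = (1 + μ) • Q g`, so `P g` is an eigenvector of `PQP` for `(1 + μ)(1 - μ)`.
It is nonzero: otherwise `Q g = -μ • g`, and `-μ ∉ {0, 1}` cannot be an eigenvalue of an
idempotent.
-/

lemma IsIdempotentElem.apply_apply_self {R M : Type*} [Semiring R] [AddCommMonoid M] [Module R M]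
    {f : Module.End R M} (hf : IsIdempotentElem f) (x : M) : f (f x) = f x :=
  LinearMap.congr_fun hf x

namespace Module.End

variable {R M : Type*} [CommRing R] [AddCommGroup M] [Module R M]
  {P Q : Module.End R M} {μ : R} {g : M}

theorem apply_apply_eq_one_sub_smul_of_sub_apply_eq_smul (hP : IsIdempotentElem P)
    (h : (P - Q) g = μ • g) : P (Q g) = (1 - μ) • P g := by
  have := congrArg P h
  rw [LinearMap.sub_apply, map_sub, map_smul, hP.apply_apply_self] at this
  rw [sub_smul, one_smul, ← this, sub_sub_cancel]

theorem apply_apply_eq_one_add_smul_of_sub_apply_eq_smul (hQ : IsIdempotentElem Q)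
    (h : (P - Q) g = μ • g) : Q (P g) = (1 + μ) • Q g := by
  have := congrArg Q h
  rw [LinearMap.sub_apply, map_sub, map_smul, hQ.apply_apply_self] at this
  rw [add_smul, one_smul, ← this, add_sub_cancel]

theorem apply_ne_zero_of_sub_apply_eq_smul [IsDomain R] [NoZeroSMulDivisors R M]
    (hQ : IsIdempotentElem Q) (hμ0 : μ ≠ 0) (hμm1 : μ ≠ -1) (hg : g ≠ 0)
    (h : (P - Q) g = μ • g) : P g ≠ 0 := by
  intro hPg
  have hQg : Q g = -μ • g := by
    rw [LinearMap.sub_apply, hPg, zero_sub, neg_eq_iff_eq_neg] at h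
    rw [h, neg_smul]
  have : (μ * (μ + 1)) • g = 0 := by
    have := hQ.apply_apply_self g
    rw [hQg, map_smul, hQg, smul_smul] at this
    linear_combination (norm := module) this
  rcases smul_eq_zero.mp this with hμ | hg0
  · rcases mul_eq_zero.mp hμ with hμ | hμ
    · exact hμ0 hμ
    · exact hμm1 (eq_neg_of_add_eq_zero_left hμ)
  · exact hg hg0

theorem apply_apply_apply_eq_one_sub_sq_smul_of_sub_apply_eq_smul (hP : IsIdempotentElem P)
    (hQ : IsIdempotentElem Q) (h : (P - Q) g = μ • g) :
    P (Q (P (P g))) = (1 - μ ^ 2) • P g := by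
  rw [hP.apply_apply_self, apply_apply_eq_one_add_smul_of_sub_apply_eq_smul hQ h, map_smul,
    apply_apply_eq_one_sub_smul_of_sub_apply_eq_smul hP h, smul_smul]
  ring_nf

end Module.End

theorem stmt_1_general {H : Type*} [NormedAddCommGroup H] [InnerProductSpace ℂ H]
    (P Q : H →L[ℂ] H)
    (hP2 : P ∘L P = P)
    (hQ2 : Q ∘L Q = Q)
    (μ : ℂ) (hμ0 : μ ≠ 0) (hμm1 : μ ≠ -1)
    (g : H) (hg : g ≠ 0) (heig : (P - Q) g = μ • g) :
    ∃ f : H, f ≠ 0 ∧ P (Q (P f)) = (1 - μ ^ 2) • f := by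
  have hP : IsIdempotentElem (P : Module.End ℂ H) :=
    congrArg ContinuousLinearMap.toLinearMap hP2
  have hQ : IsIdempotentElem (Q : Module.End ℂ H) :=
    congrArg ContinuousLinearMap.toLinearMap hQ2
  have heig' : ((P : Module.End ℂ H) - Q) g = μ • g := heig
  exact ⟨P g, Module.End.apply_ne_zero_of_sub_apply_eq_smul hQ hμ0 hμm1 hg heig',
    Module.End.apply_apply_apply_eq_one_sub_sq_smul_of_sub_apply_eq_smul hP hQ heig'⟩

/-- If `P, Q` are orthogonal projections and `μ ≠ 0, 1, −1` is an eigenvalue of `P − Q`,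
then `1 − μ²` is an eigenvalue of `PQP`. -/
theorem stmt_1 {H : Type*} [NormedAddCommGroup H] [InnerProductSpace ℂ H] [CompleteSpace H]
    (P Q : H →L[ℂ] H)
    (hP : IsSelfAdjoint P) (hP2 : P ∘L P = P)
    (hQ : IsSelfAdjoint Q) (hQ2 : Q ∘L Q = Q)
    (μ : ℂ) (hμ0 : μ ≠ 0) (hμ1 : μ ≠ 1) (hμm1 : μ ≠ -1)
    (g : H) (hg : g ≠ 0) (heig : (P - Q) g = μ • g) :
    ∃ f : H, f ≠ 0 ∧ P (Q (P f)) = (1 - μ ^ 2) • f :=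
  stmt_1_general P Q hP2 hQ2 μ hμ0 hμm1 g hg heig
end

section
/- Let H be a complex Hilbert space and let P and Q be orthogonal projections on H. If λ is an eigenvalue of P − Q with 0 < |λ| < 1, then both 1 + √(1−λ²) and 1 − √(1−λ²) are eigenvalues of P + Q. -/
/-!
For idempotents `P`, `Q` the elements `A = P - Q` and `T = P + Q - 1` satisfy `A² + T² = 1` and
`AT + TA = 0`. If `Ag = λg`, then `T²g = (1 - λ²)g`, so for `c = ±√(1 - λ²)` the vector
`Tg + cg` is a `c`-eigenvector of `T`, i.e. a `(1 + c)`-eigenvector of `P + Q`. It is nonzero: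
`Tg = -cg` would give `0 = (AT + TA)g = -2cλg`.
-/

namespace IsIdempotentElem

variable {R : Type*} [Ring R] {p q : R}

theorem sub_sq_add_add_sub_one_sq (hp : IsIdempotentElem p) (hq : IsIdempotentElem q) :
    (p - q) ^ 2 + (p + q - 1) ^ 2 = 1 := by
  have h : (p - q) ^ 2 + (p + q - 1) ^ 2 = 2 * (p * p) + 2 * (q * q) - 2 * p - 2 * q + 1 := by
    noncomm_ring
  rw [h, hp.eq, hq.eq]
  noncomm_ring

theorem anticommute_sub_add_sub_one (hp : IsIdempotentElem p) (hq : IsIdempotentElem q) :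
    (p - q) * (p + q - 1) + (p + q - 1) * (p - q) = 0 := by
  have h : (p - q) * (p + q - 1) + (p + q - 1) * (p - q) = 2 * (p * p - q * q - p + q) := by
    noncomm_ring
  rw [h, hp.eq, hq.eq]
  noncomm_ring

end IsIdempotentElem

namespace Module.End

variable {K V : Type*} [Field K] [NeZero (2 : K)] [AddCommGroup V] [Module K V]

theorem hasEigenvector_add_smul_of_sq_add_sq_eq_one {a t : End K V} (hsq : a ^ 2 + t ^ 2 = 1)
    (hanti : a * t + t * a = 0) {l c : K} {g : V} (hg : a.HasEigenvector l g) (hl : l ≠ 0)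
    (hc : c ^ 2 = 1 - l ^ 2) (hc0 : c ≠ 0) : t.HasEigenvector c (t g + c • g) := by
  have hag : a g = l • g := hg.apply_eq_smul
  have htt : t (t g) = c ^ 2 • g := by
    have h := LinearMap.congr_fun hsq g
    simp only [LinearMap.add_apply, pow_two, mul_apply, one_apply, hag, map_smul, smul_smul] at h
    rw [eq_sub_of_add_eq' h, hc]
    module
  refine hasEigenvector_iff.mpr ⟨mem_eigenspace_iff.mpr ?_, fun h0 => ?_⟩
  · rw [map_add, map_smul, htt, smul_add, smul_smul, ← pow_two, add_comm]
  · have htg : t g = -(c • g) := eq_neg_of_add_eq_zero_left h0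
    have h := LinearMap.congr_fun hanti g
    simp only [LinearMap.add_apply, mul_apply, LinearMap.zero_apply, hag, htg, map_neg,
      map_smul, smul_neg, smul_smul] at h
    have h2lc : (2 * (l * c)) • g = 0 := by
      rw [← neg_eq_zero, ← h]
      module
    rcases smul_eq_zero.mp h2lc with h2 | hg0
    · exact mul_ne_zero two_ne_zero (mul_ne_zero hl hc0) h2
    · exact (hasEigenvector_iff.mp hg).2 hg0

theorem hasEigenvector_add_of_isIdempotentElem {P Q : End K V} (hP : IsIdempotentElem P)
    (hQ : IsIdempotentElem Q) {l c : K} {g : V} (hg : (P - Q).HasEigenvector l g) (hl : l ≠ 0)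
    (hc : c ^ 2 = 1 - l ^ 2) (hc0 : c ≠ 0) :
    (P + Q).HasEigenvector (1 + c) ((P + Q - 1) g + c • g) := by
  have ht := hasEigenvector_add_smul_of_sq_add_sq_eq_one (hP.sub_sq_add_add_sub_one_sq hQ)
    (hP.anticommute_sub_add_sub_one hQ) hg hl hc hc0
  refine hasEigenvector_iff.mpr ⟨mem_eigenspace_iff.mpr ?_, (hasEigenvector_iff.mp ht).2⟩
  have h := ht.apply_eq_smul
  rw [LinearMap.sub_apply, one_apply] at h
  rw [add_smul, one_smul, ← h]
  abel

end Module.End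

theorem stmt_3_general {H : Type*} [NormedAddCommGroup H] [InnerProductSpace ℂ H]
    (P Q : H →L[ℂ] H)
    (hP2 : P ∘L P = P)
    (hQ2 : Q ∘L Q = Q)
    (l : ℝ) (hl0 : 0 < |l|) (hl1 : |l| < 1)
    (g : H) (hg : g ≠ 0) (heig : (P - Q) g = (l : ℂ) • g) :
    (∃ f : H, f ≠ 0 ∧ (P + Q) f = ((1 + Real.sqrt (1 - l ^ 2) : ℝ) : ℂ) • f) ∧
    (∃ f : H, f ≠ 0 ∧ (P + Q) f = ((1 - Real.sqrt (1 - l ^ 2) : ℝ) : ℂ) • f) := by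
  have hP : IsIdempotentElem (P : Module.End ℂ H) :=
    (show IsIdempotentElem P from hP2).map ContinuousLinearMap.toLinearMapRingHom
  have hQ : IsIdempotentElem (Q : Module.End ℂ H) :=
    (show IsIdempotentElem Q from hQ2).map ContinuousLinearMap.toLinearMapRingHom
  have hPQg : Module.End.HasEigenvector ((P : Module.End ℂ H) - (Q : Module.End ℂ H)) l g :=
    Module.End.hasEigenvector_iff.mpr ⟨Module.End.mem_eigenspace_iff.mpr heig, hg⟩
  have hl : (l : ℂ) ≠ 0 := by exact_mod_cast abs_pos.mp hl0
  have eigen_of_sq : ∀ c : ℝ, c ^ 2 = 1 - l ^ 2 → c ≠ 0 →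
      ∃ f : H, f ≠ 0 ∧ (P + Q) f = ((1 + c : ℝ) : ℂ) • f := by
    intro c hc hc0
    have h := Module.End.hasEigenvector_add_of_isIdempotentElem hP hQ hPQg hl (c := c)
      (by exact_mod_cast hc) (by exact_mod_cast hc0)
    exact ⟨_, (Module.End.hasEigenvector_iff.mp h).2, by simpa using h.apply_eq_smul⟩
  have hs : 0 < 1 - l ^ 2 := by nlinarith [sq_abs l]
  have hs0 : √(1 - l ^ 2) ≠ 0 := (Real.sqrt_pos.mpr hs).ne'
  refine ⟨eigen_of_sq _ (Real.sq_sqrt hs.le) hs0, ?_⟩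
  simpa [sub_eq_add_neg] using
    eigen_of_sq (-√(1 - l ^ 2)) (by rw [neg_sq, Real.sq_sqrt hs.le]) (neg_ne_zero.mpr hs0)

/-- If `λ` is an eigenvalue of `P − Q` with `0 < |λ| < 1`, then `1 ± √(1−λ²)` are
eigenvalues of `P + Q`. -/
theorem stmt_3 {H : Type*} [NormedAddCommGroup H] [InnerProductSpace ℂ H] [CompleteSpace H]
    (P Q : H →L[ℂ] H)
    (hP : IsSelfAdjoint P) (hP2 : P ∘L P = P)
    (hQ : IsSelfAdjoint Q) (hQ2 : Q ∘L Q = Q)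
    (l : ℝ) (hl0 : 0 < |l|) (hl1 : |l| < 1)
    (g : H) (hg : g ≠ 0) (heig : (P - Q) g = (l : ℂ) • g) :
    (∃ f : H, f ≠ 0 ∧ (P + Q) f = ((1 + Real.sqrt (1 - l ^ 2) : ℝ) : ℂ) • f) ∧
    (∃ f : H, f ≠ 0 ∧ (P + Q) f = ((1 - Real.sqrt (1 - l ^ 2) : ℝ) : ℂ) • f) :=
  stmt_3_general P Q hP2 hQ2 l hl0 hl1 g hg heig
end

section
/- Let H be a complex Hilbert space and let P and Q be orthogonal projections on H. If μ is an eigenvalue of P + Q with 0 < μ < 2 and μ ≠ 1, then both √(1−(μ−1)²) and −√(1−(μ−1)²) are eigenvalues of P − Q. -/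
/-!
If `P`, `Q` are idempotents and `(P + Q) g = μ g`, then `P (Q g) = (μ - 1) P g` and
`Q (P g) = (μ - 1) Q g`. Hence `D = P - Q` satisfies `D² g = μ (2 - μ) g`, so for each square
root `c` of `μ (2 - μ)` the vector `D g + c g` is an eigenvector of `D` with eigenvalue `c`.
It is nonzero: otherwise `D g = -c g`, and `D` anticommuting with `P + Q - 1` on `g`, i.e.
`(P + Q) D g = (2 - μ) D g`, forces `2 c (μ - 1) g = 0`.
-/

lemma IsIdempotentElem.apply_apply {R M : Type*} [Semiring R] [AddCommMonoid M] [Module R M]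
    {P : Module.End R M} (hP : IsIdempotentElem P) (x : M) : P (P x) = P x :=
  congr($hP.eq x)

namespace Module.End

variable {K V : Type*} [Field K] [AddCommGroup V] [Module K V] {P Q : Module.End K V}
  {μ : K} {g : V}

lemma apply_apply_of_isIdempotentElem_of_add_apply (hP : IsIdempotentElem P)
    (hg : P g + Q g = μ • g) : P (Q g) = (μ - 1) • P g := by
  rw [eq_sub_of_add_eq' hg, map_sub, map_smul, hP.apply_apply]
  module

lemma sub_apply_sub_apply_of_add_apply (hP : IsIdempotentElem P) (hQ : IsIdempotentElem Q)
    (hg : (P + Q) g = μ • g) : (P - Q) ((P - Q) g) = (μ * (2 - μ)) • g := by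
  have hPQ := apply_apply_of_isIdempotentElem_of_add_apply hP hg
  have hQP := apply_apply_of_isIdempotentElem_of_add_apply hQ ((add_comm _ _).trans hg)
  calc (P - Q) ((P - Q) g) = P (P g) - P (Q g) - Q (P g) + Q (Q g) := by
        simp only [LinearMap.sub_apply, map_sub]; abel
    _ = (2 - μ) • (P + Q) g := by
        rw [hP.apply_apply, hQ.apply_apply, hPQ, hQP, LinearMap.add_apply]; module
    _ = (μ * (2 - μ)) • g := by rw [hg, smul_smul, mul_comm]

lemma add_apply_sub_apply_of_add_apply (hP : IsIdempotentElem P) (hQ : IsIdempotentElem Q)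
    (hg : (P + Q) g = μ • g) : (P + Q) ((P - Q) g) = (2 - μ) • (P - Q) g := by
  have hPQ := apply_apply_of_isIdempotentElem_of_add_apply hP hg
  have hQP := apply_apply_of_isIdempotentElem_of_add_apply hQ ((add_comm _ _).trans hg)
  calc (P + Q) ((P - Q) g) = P (P g) - P (Q g) + Q (P g) - Q (Q g) := by
        simp only [LinearMap.add_apply, LinearMap.sub_apply, map_sub]; abel
    _ = (2 - μ) • (P - Q) g := by
        rw [hP.apply_apply, hQ.apply_apply, hPQ, hQP, LinearMap.sub_apply]; module

lemma hasEigenvalue_sub_of_hasEigenvector_add [NeZero (2 : K)] (hP : IsIdempotentElem P)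
    (hQ : IsIdempotentElem Q) (hg : (P + Q).HasEigenvector μ g) (hμ : μ ≠ 1) {c : K}
    (hc : c ≠ 0) (hc2 : c ^ 2 = μ * (2 - μ)) : (P - Q).HasEigenvalue c := by
  have hgμ : (P + Q) g = μ • g := mem_eigenspace_iff.mp hg.1
  refine hasEigenvalue_of_hasEigenvector (x := (P - Q) g + c • g) ⟨?_, ?_⟩
  · rw [mem_eigenspace_iff, map_add, map_smul, sub_apply_sub_apply_of_add_apply hP hQ hgμ, ← hc2]
    module
  · intro h0
    have hD : (P - Q) g = (-c) • g := by rw [neg_smul]; exact eq_neg_of_add_eq_zero_left h0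
    have hanti := add_apply_sub_apply_of_add_apply hP hQ hgμ
    rw [hD, map_smul, hgμ, smul_smul, smul_smul, ← sub_eq_zero, ← sub_smul] at hanti
    have hcoef : -c * μ - (2 - μ) * -c = 2 * c * (1 - μ) := by ring
    rw [hcoef] at hanti
    simp [hc, sub_eq_zero, hμ.symm, hg.2, two_ne_zero] at hanti

end Module.End

theorem stmt_4_general {H : Type*} [NormedAddCommGroup H] [InnerProductSpace ℂ H]
    (P Q : H →L[ℂ] H)
    (hP2 : P ∘L P = P)
    (hQ2 : Q ∘L Q = Q)
    (μ : ℝ) (hμ0 : 0 < μ) (hμ2 : μ < 2) (hμ1 : μ ≠ 1)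
    (g : H) (hg : g ≠ 0) (heig : (P + Q) g = (μ : ℂ) • g) :
    (∃ f : H, f ≠ 0 ∧ (P - Q) f = ((Real.sqrt (1 - (μ - 1) ^ 2) : ℝ) : ℂ) • f) ∧
    (∃ f : H, f ≠ 0 ∧ (P - Q) f = ((-Real.sqrt (1 - (μ - 1) ^ 2) : ℝ) : ℂ) • f) := by
  have hPi : IsIdempotentElem (P : Module.End ℂ H) := by ext x; exact congr($hP2 x)
  have hQi : IsIdempotentElem (Q : Module.End ℂ H) := by ext x; exact congr($hQ2 x)
  have hg' : Module.End.HasEigenvector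
      ((P : Module.End ℂ H) + (Q : Module.End ℂ H)) (μ : ℂ) g :=
    ⟨Module.End.mem_eigenspace_iff.mpr heig, hg⟩
  have hμ1' : (μ : ℂ) ≠ 1 := mod_cast hμ1
  have exists_eigenvector (c : ℝ) (hc : c ≠ 0) (hc2 : c ^ 2 = 1 - (μ - 1) ^ 2) :
      ∃ f : H, f ≠ 0 ∧ (P - Q) f = (c : ℂ) • f := by
    have hc2' : (c : ℂ) ^ 2 = μ * (2 - μ) := by
      rw [← Complex.ofReal_pow, hc2]; push_cast; ring
    obtain ⟨f, hf⟩ := (Module.End.hasEigenvalue_sub_of_hasEigenvector_add hPi hQi hg' hμ1'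
      (mod_cast hc) hc2').exists_hasEigenvector
    exact ⟨f, hf.2, Module.End.mem_eigenspace_iff.mp hf.1⟩
  have hpos : 0 < 1 - (μ - 1) ^ 2 := by nlinarith
  have hsqrt := Real.sq_sqrt hpos.le
  exact ⟨exists_eigenvector _ (Real.sqrt_pos.mpr hpos).ne' hsqrt,
    exists_eigenvector _ (neg_ne_zero.mpr (Real.sqrt_pos.mpr hpos).ne') (by rw [neg_sq, hsqrt])⟩

/-- If `μ` is an eigenvalue of `P + Q` with `0 < μ < 2`, `μ ≠ 1`, then `±√(1−(μ−1)²)` are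
eigenvalues of `P − Q`. -/
theorem stmt_4 {H : Type*} [NormedAddCommGroup H] [InnerProductSpace ℂ H] [CompleteSpace H]
    (P Q : H →L[ℂ] H)
    (hP : IsSelfAdjoint P) (hP2 : P ∘L P = P)
    (hQ : IsSelfAdjoint Q) (hQ2 : Q ∘L Q = Q)
    (μ : ℝ) (hμ0 : 0 < μ) (hμ2 : μ < 2) (hμ1 : μ ≠ 1)
    (g : H) (hg : g ≠ 0) (heig : (P + Q) g = (μ : ℂ) • g) :
    (∃ f : H, f ≠ 0 ∧ (P - Q) f = ((Real.sqrt (1 - (μ - 1) ^ 2) : ℝ) : ℂ) • f) ∧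
    (∃ f : H, f ≠ 0 ∧ (P - Q) f = ((-Real.sqrt (1 - (μ - 1) ^ 2) : ℝ) : ℂ) • f) :=
  stmt_4_general P Q hP2 hQ2 μ hμ0 hμ2 hμ1 g hg heig
end

section
/- Let a ∈ ℂ with 0 < |a| < 1, and let ω_a = (1 − √(1 − |a|²))/conj(a) be the fixed point of φ_a in the open unit disk. Then for every z ∈ ℂ with |z| < 1, φ_{ω_a}(φ_a(z)) = −φ_{ω_a}(z). -/
/-!
For `b` in the disk, `φ_b ∘ φ_a = -φ_b` reduces, after clearing denominators, to a polynomial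
identity in `z` whose coefficients vanish exactly when `a (1 + |b|²) = 2b`; and a fixed point `b`
of `φ_a` in the disk satisfies this relation, because `X = a (1 + |b|²) - 2b` obeys
`X = -b² conj X`. Conceptually, `φ_b ∘ φ_a ∘ φ_b` is an involutive automorphism fixing `0`,
hence the rotation by `-1`.
-/

open Complex ComplexConjugate

noncomputable def mobius (b z : ℂ) : ℂ := (b - z) / (1 - conj b * z)

lemma sq_norm_one_sub_conj_mul_sub_sq_norm_sub (a z : ℂ) :
    ‖1 - conj a * z‖ ^ 2 - ‖a - z‖ ^ 2 = (1 - ‖a‖ ^ 2) * (1 - ‖z‖ ^ 2) := by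
  simp only [Complex.sq_norm, normSq_apply, sub_re, sub_im, mul_re, mul_im, conj_re, conj_im,
    one_re, one_im]
  ring

lemma norm_sub_lt_norm_one_sub_conj_mul {a z : ℂ} (ha : ‖a‖ < 1) (hz : ‖z‖ < 1) :
    ‖a - z‖ < ‖1 - conj a * z‖ := by
  have hid := sq_norm_one_sub_conj_mul_sub_sq_norm_sub a z
  have hpos : 0 < (1 - ‖a‖ ^ 2) * (1 - ‖z‖ ^ 2) := by
    apply mul_pos <;> nlinarith [norm_nonneg a, norm_nonneg z]
  exact lt_of_pow_lt_pow_left₀ 2 (norm_nonneg _) (by linarith)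

lemma one_sub_conj_mul_ne_zero {a z : ℂ} (ha : ‖a‖ < 1) (hz : ‖z‖ < 1) :
    1 - conj a * z ≠ 0 :=
  norm_pos_iff.mp ((norm_nonneg _).trans_lt (norm_sub_lt_norm_one_sub_conj_mul ha hz))

lemma norm_mobius_lt_one {a z : ℂ} (ha : ‖a‖ < 1) (hz : ‖z‖ < 1) : ‖mobius a z‖ < 1 := by
  rw [mobius, norm_div, div_lt_one (norm_pos_iff.mpr (one_sub_conj_mul_ne_zero ha hz))]
  exact norm_sub_lt_norm_one_sub_conj_mul ha hz

/-- `X := a (1 + |b|²) - 2b` satisfies `X = -b² conj X`, so `X = 0` when `|b| < 1`. -/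
lemma mul_one_add_sq_norm_eq_of_mobius_eq_self {a b : ℂ} (hb : ‖b‖ < 1)
    (hfix : mobius a b = b) : a * (1 + ‖b‖ ^ 2) = 2 * b := by
  have hden : 1 - conj a * b ≠ 0 := by
    intro h
    rw [mobius, h, div_zero] at hfix
    simp [← hfix] at h
  have hfix' : a - b = b * (1 - conj a * b) := by rwa [mobius, div_eq_iff hden] at hfix
  set X := a * (1 + ‖b‖ ^ 2) - 2 * b with hX
  have hXconj : X = -(b ^ 2 * conj X) := by
    simp only [hX, map_sub, map_mul, map_add, map_one, map_ofNat, ← mul_conj', conj_conj]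
    linear_combination (1 + b * conj b) * hfix'
  have hnorm : ‖X‖ * (1 - ‖b‖ ^ 2) = 0 := by
    have : ‖X‖ = ‖b‖ ^ 2 * ‖X‖ := by
      conv_lhs => rw [hXconj, norm_neg, norm_mul, norm_pow, RCLike.norm_conj]
    linear_combination this
  have : ‖X‖ = 0 := (mul_eq_zero.mp hnorm).resolve_right (by nlinarith [norm_nonneg b])
  rwa [norm_eq_zero, hX, sub_eq_zero] at this

lemma sub_mobius {a z : ℂ} (b : ℂ) (h : 1 - conj a * z ≠ 0) :
    b - mobius a z = (b * (1 - conj a * z) - (a - z)) / (1 - conj a * z) := by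
  rw [mobius, sub_div (b * _), mul_div_cancel_right₀ b h]

lemma one_sub_conj_mul_mobius {a z : ℂ} (b : ℂ) (h : 1 - conj a * z ≠ 0) :
    1 - conj b * mobius a z = ((1 - conj a * z) - conj b * (a - z)) / (1 - conj a * z) := by
  rw [mobius, sub_div (1 - _), div_self h, mul_div_assoc]

lemma mobius_mobius_eq_neg {a b z : ℂ} (ha : ‖a‖ < 1) (hb : ‖b‖ < 1) (hz : ‖z‖ < 1)
    (hab : a * (1 + ‖b‖ ^ 2) = 2 * b) : mobius b (mobius a z) = -mobius b z := by
  rw [← mul_conj'] at hab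
  have hab' := congrArg conj hab
  simp only [map_mul, map_add, map_one, map_ofNat, conj_conj] at hab'
  have hreal : a * conj b = conj a * b := by
    have hpos : (1 + b * conj b) ≠ 0 := by
      rw [mul_conj']; exact_mod_cast (by positivity : (1 + ‖b‖ ^ 2 : ℝ) ≠ 0)
    refine mul_left_cancel₀ hpos ?_
    linear_combination conj b * hab - b * hab'
  have hden := one_sub_conj_mul_ne_zero hb (norm_mobius_lt_one ha hz)
  have h1 := one_sub_conj_mul_ne_zero ha hz
  rw [one_sub_conj_mul_mobius b h1, div_ne_zero_iff] at hden
  rw [mobius, sub_mobius b h1, one_sub_conj_mul_mobius b h1, div_div_div_cancel_right₀ h1,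
    mobius, neg_div', div_eq_div_iff hden.1 (one_sub_conj_mul_ne_zero hb hz)]
  -- the coefficients of `1`, `z²` and `z` vanish by `hab`, its conjugate, and `a b̄ ∈ ℝ`
  linear_combination (-1) * hab + z ^ 2 * hab' + 2 * z * hreal

noncomputable def mobiusFixedPoint (a : ℂ) : ℂ := (1 - (Real.sqrt (1 - ‖a‖ ^ 2) : ℂ)) / conj a

lemma sq_sqrt_one_sub_sq_norm {a : ℂ} (ha1 : ‖a‖ < 1) :
    Real.sqrt (1 - ‖a‖ ^ 2) ^ 2 = 1 - ‖a‖ ^ 2 :=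
  Real.sq_sqrt (by nlinarith [norm_nonneg a])

lemma norm_mobiusFixedPoint_lt_one {a : ℂ} (ha0 : a ≠ 0) (ha1 : ‖a‖ < 1) :
    ‖mobiusFixedPoint a‖ < 1 := by
  have hs2 := sq_sqrt_one_sub_sq_norm ha1
  have hs0 := Real.sqrt_nonneg (1 - ‖a‖ ^ 2)
  have ha := norm_pos_iff.mpr ha0
  rw [mobiusFixedPoint, norm_div, RCLike.norm_conj, div_lt_one ha, ← ofReal_one, ← ofReal_sub,
    norm_real, Real.norm_eq_abs, abs_lt]
  constructor <;> nlinarith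

lemma mobius_mobiusFixedPoint {a : ℂ} (ha0 : a ≠ 0) (ha1 : ‖a‖ < 1) :
    mobius a (mobiusFixedPoint a) = mobiusFixedPoint a := by
  have hden := one_sub_conj_mul_ne_zero ha1 (norm_mobiusFixedPoint_lt_one ha0 ha1)
  have hs2 : (Real.sqrt (1 - ‖a‖ ^ 2) : ℂ) ^ 2 = 1 - a * conj a := by
    rw [mul_conj']; exact_mod_cast sq_sqrt_one_sub_sq_norm ha1
  have ha0' : conj a ≠ 0 := by simpa using ha0
  rw [mobius, div_eq_iff hden]
  unfold mobiusFixedPoint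
  field_simp
  linear_combination hs2

/-- For `0 < |a| < 1` with `ω_a` the fixed point of `φ_a` in the disk, one has
`φ_{ω_a}(φ_a(z)) = −φ_{ω_a}(z)` for all `z` in the open unit disk. -/
theorem stmt_9 (a : ℂ) (ha0 : 0 < ‖a‖) (ha1 : ‖a‖ < 1)
    (φ : ℂ → ℂ → ℂ) (hφ : ∀ b z : ℂ, φ b z = (b - z) / (1 - (starRingEnd ℂ) b * z))
    (ω : ℂ) (hω : ω = (1 - (Real.sqrt (1 - ‖a‖ ^ 2) : ℂ)) / (starRingEnd ℂ) a) :
    ∀ z : ℂ, ‖z‖ < 1 → φ ω (φ a z) = -φ ω z := by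
  intro z hz
  obtain rfl : φ = mobius := funext fun b => funext (hφ b)
  obtain rfl : ω = mobiusFixedPoint a := hω
  have ha0' : a ≠ 0 := norm_pos_iff.mp ha0
  have hω1 := norm_mobiusFixedPoint_lt_one ha0' ha1
  have hfix := mobius_mobiusFixedPoint ha0' ha1
  exact mobius_mobius_eq_neg ha1 hω1 hz (mul_one_add_sq_norm_eq_of_mobius_eq_self hω1 hfix)
end

section
/- Let H be a complex Hilbert space and let T be a bounded linear operator on H with T² = I (a reflection). Then T*T is a positive invertible operator, and the unitary part ρ = T (T*T)^{−1/2} of the polar decomposition of T is a symmetry intertwining T and T*: ρ* = ρ, ρ² = I, and ρ T ρ = T*. -/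
open ContinuousLinearMap

/-!
`ρ = T|T|⁻¹` is unitary for every invertible `T`. For a reflection,
`T = T⁻¹ = |T|⁻¹ρ* = ρ* (ρ|T|⁻¹ρ*)` is a second polar decomposition, so uniqueness of the positive
square root of `T*T` gives `ρ|T|⁻¹ρ* = |T|`. Hence `ρ*|T| = T = ρ|T|`, and `ρ* = ρ`.
-/

lemma isUnit_of_mul_self_eq_one {M : Type*} [Monoid M] {a : M} (h : a * a = 1) : IsUnit a :=
  isUnit_iff_exists.2 ⟨a, h, h⟩

section CStarAlgebra

variable {A : Type*} [CStarAlgebra A] [PartialOrder A] [StarOrderedRing A]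

lemma CFC.sqrt_star_mul_self_eq_of_eq_mul {t v p : A} (ht : t = v * p) (hv : star v * v = 1)
    (hp : 0 ≤ p) : CFC.sqrt (star t * t) = p := by
  refine CFC.sqrt_unique ?_ hp
  rw [ht, star_mul, (IsSelfAdjoint.of_nonneg hp).star_eq, mul_assoc, ← mul_assoc (star v), hv,
    one_mul]

section InvSqrt

variable {a : A} (ha : IsStrictlyPositive a)
include ha

lemma continuousOn_inv_sqrt_spectrum :
    ContinuousOn (fun x : ℝ => (√x)⁻¹) (spectrum ℝ a) :=
  Real.continuous_sqrt.continuousOn.inv₀ fun _ hx => (Real.sqrt_pos.2 (ha.spectrum_pos hx)).ne'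

lemma cfc_inv_sqrt_mul_sqrt : cfc (fun x : ℝ => (√x)⁻¹) a * CFC.sqrt a = 1 := by
  rw [CFC.sqrt_eq_real_sqrt a ha.nonneg, cfcₙ_eq_cfc,
    ← cfc_mul _ _ a (continuousOn_inv_sqrt_spectrum ha), ← cfc_one ℝ a]
  exact cfc_congr fun x hx => inv_mul_cancel₀ (Real.sqrt_pos.2 (ha.spectrum_pos hx)).ne'

lemma sqrt_mul_cfc_inv_sqrt : CFC.sqrt a * cfc (fun x : ℝ => (√x)⁻¹) a = 1 := by
  rw [CFC.sqrt_eq_real_sqrt a ha.nonneg, cfcₙ_eq_cfc,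
    ← cfc_mul _ _ a Real.continuous_sqrt.continuousOn (continuousOn_inv_sqrt_spectrum ha),
    ← cfc_one ℝ a]
  exact cfc_congr fun x hx => mul_inv_cancel₀ (Real.sqrt_pos.2 (ha.spectrum_pos hx)).ne'

end InvSqrt

lemma cfc_inv_sqrt_nonneg (a : A) : 0 ≤ cfc (fun x : ℝ => (√x)⁻¹) a :=
  cfc_nonneg fun x _ => inv_nonneg.2 (Real.sqrt_nonneg x)

/-- Only meaningful for invertible `t`, where it is `t |t|⁻¹`. -/
noncomputable def polarUnitary (t : A) : A :=
  t * cfc (fun x : ℝ => (√x)⁻¹) (star t * t)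

lemma IsUnit.isStrictlyPositive_star_mul_self {t : A} (ht : IsUnit t) :
    IsStrictlyPositive (star t * t) := by
  simpa using ht.isStrictlyPositive_star_left_conjugate_iff.2 (isStrictlyPositive_one (A := A))

section Polar

variable {t : A} (ht : IsUnit t)
include ht

lemma polarUnitary_mul_sqrt : polarUnitary t * CFC.sqrt (star t * t) = t := by
  rw [polarUnitary, mul_assoc, cfc_inv_sqrt_mul_sqrt ht.isStrictlyPositive_star_mul_self, mul_one]

lemma polarUnitary_mem_unitary : polarUnitary t ∈ unitary A := by
  have hpos := ht.isStrictlyPositive_star_mul_self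
  set f := cfc (fun x : ℝ => (√x)⁻¹) (star t * t)
  set b := CFC.sqrt (star t * t)
  have hfb : f * b = 1 := cfc_inv_sqrt_mul_sqrt hpos
  have hbf : b * f = 1 := sqrt_mul_cfc_inv_sqrt hpos
  have hf : star f = f := (IsSelfAdjoint.of_nonneg (cfc_inv_sqrt_nonneg _)).star_eq
  have hstar : star (t * f) * (t * f) = 1 := calc
    star (t * f) * (t * f) = f * (star t * t) * f := by rw [star_mul, hf]; noncomm_ring
    _ = (f * b) * (b * f) := by rw [← CFC.sqrt_mul_sqrt_self (star t * t) hpos.nonneg]; noncomm_ring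
    _ = 1 := by rw [hfb, hbf, one_mul]
  exact (ht.mul (isUnit_iff_exists.2 ⟨b, hfb, hbf⟩)).mem_unitary_of_star_mul_self hstar

end Polar

section Involution

variable {t : A} (ht : t * t = 1)
include ht

lemma star_polarUnitary_of_mul_self_eq_one : star (polarUnitary t) = polarUnitary t := by
  have hunit : IsUnit t := isUnit_of_mul_self_eq_one ht
  have hpos := hunit.isStrictlyPositive_star_mul_self
  set ρ := polarUnitary t
  set f := cfc (fun x : ℝ => (√x)⁻¹) (star t * t)
  set b := CFC.sqrt (star t * t)
  have hρb : ρ * b = t := polarUnitary_mul_sqrt hunit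
  have hρ : ρ ∈ unitary A := polarUnitary_mem_unitary hunit
  have hfρ : f * star ρ = t := by
    refine left_inv_eq_right_inv ?_ ht
    rw [← hρb, mul_assoc, ← mul_assoc (star ρ), Unitary.star_mul_self_of_mem hρ, one_mul,
      cfc_inv_sqrt_mul_sqrt hpos]
  have hpolar : star ρ * (ρ * f * star ρ) = t := by
    rw [← mul_assoc, ← mul_assoc, Unitary.star_mul_self_of_mem hρ, one_mul, hfρ]
  have hb : b = ρ * f * star ρ :=
    CFC.sqrt_star_mul_self_eq_of_eq_mul hpolar.symm
      (by simpa using Unitary.mul_star_self_of_mem hρ)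
      (star_right_conjugate_nonneg (cfc_inv_sqrt_nonneg _) ρ)
  rw [← hb] at hpolar
  exact hpos.isUnit_cfcSqrt.mul_left_inj.1 (hpolar.trans hρb.symm)

lemma polarUnitary_mul_self_of_mul_self_eq_one : polarUnitary t * polarUnitary t = 1 := by
  conv_lhs => arg 1; rw [← star_polarUnitary_of_mul_self_eq_one ht]
  exact Unitary.star_mul_self_of_mem (polarUnitary_mem_unitary (isUnit_of_mul_self_eq_one ht))

lemma polarUnitary_mul_mul_polarUnitary_of_mul_self_eq_one :
    polarUnitary t * t * polarUnitary t = star t := by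
  have hunit : IsUnit t := isUnit_of_mul_self_eq_one ht
  have hb : star (CFC.sqrt (star t * t)) = CFC.sqrt (star t * t) :=
    (IsSelfAdjoint.of_nonneg (CFC.sqrt_nonneg _)).star_eq
  conv_lhs => arg 1; arg 2; rw [← polarUnitary_mul_sqrt hunit]
  conv_rhs =>
    rw [← polarUnitary_mul_sqrt hunit, star_mul, hb, star_polarUnitary_of_mul_self_eq_one ht]
  rw [← mul_assoc, polarUnitary_mul_self_of_mul_self_eq_one ht, one_mul]

end Involution

end CStarAlgebra

/-- If `T² = I` on a complex Hilbert space, then `T*T` is positive and invertible, and the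
unitary part `ρ = T(T*T)^{−1/2}` of the polar decomposition of `T` is a symmetry
intertwining `T` and `T*`: `ρ* = ρ`, `ρ² = I` and `ρTρ = T*`. -/
theorem stmt_12 {H : Type*} [NormedAddCommGroup H] [InnerProductSpace ℂ H] [CompleteSpace H]
    (T : H →L[ℂ] H) (hT : T * T = 1) :
    (ContinuousLinearMap.adjoint T * T).IsPositive ∧
    IsUnit (ContinuousLinearMap.adjoint T * T) ∧
    ∀ ρ : H →L[ℂ] H,
      ρ = T * cfc (fun x : ℝ => (Real.sqrt x)⁻¹) (ContinuousLinearMap.adjoint T * T) →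
        ContinuousLinearMap.adjoint ρ = ρ ∧ ρ * ρ = 1 ∧
          ρ * T * ρ = ContinuousLinearMap.adjoint T := by
  have hpos := (isUnit_of_mul_self_eq_one hT).isStrictlyPositive_star_mul_self
  simp only [← star_eq_adjoint]
  refine ⟨(nonneg_iff_isPositive _).1 hpos.nonneg, hpos.isUnit, ?_⟩
  rintro ρ rfl
  exact ⟨star_polarUnitary_of_mul_self_eq_one hT, polarUnitary_mul_self_of_mul_self_eq_one hT,
    polarUnitary_mul_mul_polarUnitary_of_mul_self_eq_one hT⟩
end

section
/- Let H be a complex Hilbert space, let T be a bounded linear operator on H with T² = I, and let ρ = T (T*T)^{−1/2} be the unitary part of the polar decomposition of T. Let W be a symmetry on H (W* = W and W² = I) such that Wρ commutes with T*T. Then W ρ T = T ρ W, W ρ T* = T* ρ W, and (T*T) W = W (T*T)^{−1}. -/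
/-!
Write `A = T*T` and `B = A^{-1/2}`, so that `ρ = TB`. Since `T² = 1`, `A` is invertible with
`A⁻¹ = TT*`, and `B² = A⁻¹`. As `A` is self-adjoint, anything commuting with `A` commutes with
every real continuous function of `A`; so `S = Wρ` commutes with `B`, which gives `S = BWT`.
All three identities then follow by cancelling the invertible factors `B` and `T`.
-/

open ContinuousLinearMap

section Monoid

variable {M : Type*} [Monoid M]

lemma mul_mul_mul_eq_one_of_mul_self_eq_one {a b : M} (ha : a * a = 1) (hb : b * b = 1) :
    b * a * (a * b) = 1 := by
  rw [mul_assoc, ← mul_assoc a, ha, one_mul, hb]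

variable {T Ts B W : M}

lemma mul_polar_eq_of_commute (hB : IsRightRegular B) (hSB : Commute (W * (T * B)) B) :
    W * (T * B) = B * (W * T) :=
  hB <| by
    calc W * (T * B) * B = B * (W * (T * B)) := hSB.eq
      _ = B * (W * T) * B := by simp only [mul_assoc]

lemma polar_relations_of_commute (hT : T * T = 1) (hB : IsRightRegular B)
    (hAB : Commute B (Ts * T)) (hSB : Commute (W * (T * B)) B)
    (hSA : Commute (W * (T * B)) (Ts * T)) :
    W * (T * B) * T = T * (T * B) * W ∧
      W * (T * B) * Ts = Ts * (T * B) * W ∧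
      Ts * T * W = W * (T * Ts) := by
  have hWTB := mul_polar_eq_of_commute hB hSB
  have hST : W * (T * B) * T = B * W := by rw [hWTB, mul_assoc, mul_assoc, hT, mul_one]
  have hTTB : T * (T * B) = B := by rw [← mul_assoc, hT, one_mul]
  refine ⟨by rw [hST, hTTB], ?_, ?_⟩
  · calc W * (T * B) * Ts = W * (T * B) * (Ts * T) * T := by
          rw [mul_assoc _ (Ts * T), mul_assoc Ts, hT, mul_one]
      _ = Ts * T * (W * (T * B) * T) := by rw [hSA.eq]; simp only [mul_assoc]
      _ = Ts * (T * B) * W := by rw [hST]; simp only [mul_assoc]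
  · refine isRightRegular_of_mul_eq_one hT (hB ?_)
    calc Ts * T * W * T * B = Ts * T * (W * (T * B)) := by simp only [mul_assoc]
      _ = W * (T * B) * (Ts * T) := hSA.eq.symm
      _ = W * T * (Ts * T) * B := by rw [mul_assoc W, mul_assoc T, hAB.eq]; simp only [mul_assoc]
      _ = W * (T * Ts) * T * B := by simp only [mul_assoc]

end Monoid

lemma cfc_inv_sqrt_mul_cfc_inv_sqrt_mul_self {A : Type*} [CStarAlgebra A] [PartialOrder A]
    [StarOrderedRing A] {a : A} (ha : IsStrictlyPositive a) :
    cfc (fun x : ℝ => (√x)⁻¹) a * cfc (fun x : ℝ => (√x)⁻¹) a * a = 1 := by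
  have hpos : ∀ x ∈ spectrum ℝ a, 0 < x := fun x hx => ha.spectrum_pos hx
  have hcont : ContinuousOn (fun x : ℝ => (√x)⁻¹) (spectrum ℝ a) :=
    Real.continuous_sqrt.continuousOn.inv₀ fun x hx => (Real.sqrt_pos.2 (hpos x hx)).ne'
  nth_rewrite 3 [← cfc_id' ℝ a]
  rw [← cfc_mul _ _ a hcont hcont,
    ← cfc_mul (fun x => (√x)⁻¹ * (√x)⁻¹) (fun x => x) a (hcont.mul hcont) continuousOn_id,
    ← cfc_one ℝ a]
  refine cfc_congr fun x hx => ?_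
  have hx := hpos x hx
  simp only [Pi.one_apply]
  field_simp
  exact (Real.sq_sqrt hx.le).symm

theorem stmt_13_general {H : Type*} [NormedAddCommGroup H] [InnerProductSpace ℂ H] [CompleteSpace H]
    (T : H →L[ℂ] H) (hT : T * T = 1)
    (ρ : H →L[ℂ] H)
    (hρ : ρ = T * cfc (fun x : ℝ => (Real.sqrt x)⁻¹) (ContinuousLinearMap.adjoint T * T))
    (W : H →L[ℂ] H)
    (hcomm : Commute (W * ρ) (ContinuousLinearMap.adjoint T * T)) :
    W * ρ * T = T * ρ * W ∧
    W * ρ * ContinuousLinearMap.adjoint T = ContinuousLinearMap.adjoint T * ρ * W ∧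
    (ContinuousLinearMap.adjoint T * T) * W =
      W * Ring.inverse (ContinuousLinearMap.adjoint T * T) := by
  have hTs : adjoint T * adjoint T = 1 := by
    simpa only [star_mul, star_one, star_eq_adjoint] using congrArg star hT
  let A : (H →L[ℂ] H)ˣ := ⟨adjoint T * T, T * adjoint T,
    mul_mul_mul_eq_one_of_mul_self_eq_one hT hTs, mul_mul_mul_eq_one_of_mul_self_eq_one hTs hT⟩
  have hApos : IsStrictlyPositive (adjoint T * T) :=
    A.isUnit.isStrictlyPositive (by simpa only [star_eq_adjoint] using star_mul_self_nonneg T)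
  have hB : IsRightRegular (cfc (fun x : ℝ => (√x)⁻¹) (adjoint T * T)) :=
    isRightRegular_of_mul_eq_one <| by
      rw [← mul_assoc]; exact cfc_inv_sqrt_mul_cfc_inv_sqrt_mul_self hApos
  subst hρ
  obtain ⟨h₁, h₂, h₃⟩ := polar_relations_of_commute hT hB ((Commute.refl _).cfc_real _)
    (hcomm.symm.cfc_real _).symm hcomm
  exact ⟨h₁, h₂, by rw [h₃, Ring.inverse_unit A]; rfl⟩

/-- Let `T² = I` on a complex Hilbert space, `ρ = T(T*T)^{−1/2}` the unitary part of the
polar decomposition of `T`, and let `W` be a symmetry such that `Wρ` commutes with `T*T`.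
Then `WρT = TρW`, `WρT* = T*ρW` and `(T*T)W = W(T*T)⁻¹`. -/
theorem stmt_13 {H : Type*} [NormedAddCommGroup H] [InnerProductSpace ℂ H] [CompleteSpace H]
    (T : H →L[ℂ] H) (hT : T * T = 1)
    (ρ : H →L[ℂ] H)
    (hρ : ρ = T * cfc (fun x : ℝ => (Real.sqrt x)⁻¹) (ContinuousLinearMap.adjoint T * T))
    (W : H →L[ℂ] H) (hWsa : ContinuousLinearMap.adjoint W = W) (hW2 : W * W = 1)
    (hcomm : Commute (W * ρ) (ContinuousLinearMap.adjoint T * T)) :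
    W * ρ * T = T * ρ * W ∧
    W * ρ * ContinuousLinearMap.adjoint T = ContinuousLinearMap.adjoint T * ρ * W ∧
    (ContinuousLinearMap.adjoint T * T) * W =
      W * Ring.inverse (ContinuousLinearMap.adjoint T * T) :=
  stmt_13_general T hT ρ hρ W hcomm
end
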